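/- arXiv:1710.04410 — 2 statements merged into one kernel-verified Lean document; each statement's English description precedes it below -/
import Mathlib

section
/- For β > 1, the equation m = tanh(βm) has a unique positive solution m_β ∈ (0,1), and the value m*(β) := √(1 - 1/β) satisfies 0 < m*(β) < m_β < 1. -/
/-! On `(-1, 1)` the equation `m = tanh (β m)` reads `artanh m = β m`. The gap
`artanh x - β x` vanishes at `0` and has derivative `(1 - x²)⁻¹ - β`, so it strictly decreases
on `[0, m*]` and strictly increases on `[m*, 1)`; at `tanh β` it equals `β (1 - tanh β) > 0`.
Hence it has exactly one positive zero, and that zero lies in `(m*, 1)`. -/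

open Real Set

namespace Real

theorem hasDerivAt_artanh {x : ℝ} (hx : x ∈ Ioo (-1) 1) :
    HasDerivAt artanh (1 - x ^ 2)⁻¹ x := by
  have hlog : HasDerivAt (fun y ↦ 1 / 2 * (log (1 + y) - log (1 - y)))
      (1 / 2 * (1 / (1 + x) - -1 / (1 - x))) x :=
    ((((hasDerivAt_id x).const_add 1).log (by grind)).sub
      (((hasDerivAt_id x).const_sub 1).log (by grind))).const_mul _
  refine (hlog.congr_of_eventuallyEq ?_).congr_deriv ?_
  · filter_upwards [Ioo_mem_nhds hx.1 hx.2] with y hy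
    rw [artanh_eq_half_log (Ioo_subset_Icc_self hy), log_div (by grind) (by grind)]
  · have : 1 + x ≠ 0 := by grind
    have : 1 - x ≠ 0 := by grind
    have : 1 - x ^ 2 ≠ 0 := by nlinarith [hx.1, hx.2]
    field_simp
    ring

theorem tanh_pos {x : ℝ} (hx : 0 < x) : 0 < tanh x := by
  rw [tanh_eq_sinh_div_cosh]
  exact div_pos (sinh_pos_iff.2 hx) (cosh_pos x)

theorem eq_tanh_iff_artanh_eq {m y : ℝ} (hm : m ∈ Ioo (-1) 1) :
    m = tanh y ↔ artanh m = y := by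
  constructor
  · rintro rfl
    exact artanh_tanh y
  · rintro rfl
    exact (tanh_artanh hm).symm

end Real

noncomputable def magnetizationGap (β x : ℝ) : ℝ := artanh x - β * x

section MagnetizationGap

variable {β x : ℝ}

theorem eq_tanh_mul_iff_magnetizationGap_eq_zero (hx : x ∈ Ioo (-1) 1) :
    x = tanh (β * x) ↔ magnetizationGap β x = 0 := by
  rw [eq_tanh_iff_artanh_eq hx, magnetizationGap, sub_eq_zero]

theorem magnetizationGap_zero : magnetizationGap β 0 = 0 := by
  simp [magnetizationGap, artanh_zero]

theorem magnetizationGap_tanh_pos (hβ : 0 < β) : 0 < magnetizationGap β (tanh β) := by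
  rw [magnetizationGap, artanh_tanh]
  nlinarith [tanh_lt_one β]

theorem hasDerivAt_magnetizationGap (hx : x ∈ Ioo (-1) 1) :
    HasDerivAt (magnetizationGap β) ((1 - x ^ 2)⁻¹ - β) x := by
  have h := (hasDerivAt_artanh hx).sub ((hasDerivAt_id' x).const_mul β)
  rwa [mul_one] at h

theorem continuousOn_magnetizationGap : ContinuousOn (magnetizationGap β) (Ioo (-1) 1) :=
  fun _ hx ↦ (hasDerivAt_magnetizationGap hx).continuousAt.continuousWithinAt

theorem sqrt_one_sub_one_div_lt_one (hβ : 0 < β) : √(1 - 1 / β) < 1 := by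
  rw [sqrt_lt' one_pos]
  have : 0 < 1 / β := by positivity
  linarith

theorem strictAntiOn_magnetizationGap (hβ : 0 < β) :
    StrictAntiOn (magnetizationGap β) (Icc 0 √(1 - 1 / β)) := by
  have hsub : Icc 0 √(1 - 1 / β) ⊆ Ioo (-1) 1 := fun x hx ↦
    ⟨by linarith [hx.1], hx.2.trans_lt (sqrt_one_sub_one_div_lt_one hβ)⟩
  refine strictAntiOn_of_deriv_neg (convex_Icc _ _)
    (continuousOn_magnetizationGap.mono hsub) fun x hx ↦ ?_
  rw [interior_Icc] at hx
  rw [(hasDerivAt_magnetizationGap (hsub (Ioo_subset_Icc_self hx))).deriv, sub_neg]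
  have hx2 : x ^ 2 < 1 - 1 / β := (lt_sqrt hx.1.le).1 hx.2
  exact inv_lt_of_inv_lt₀ hβ (by rw [← one_div]; linarith)

theorem strictMonoOn_magnetizationGap (hβ : 0 < β) :
    StrictMonoOn (magnetizationGap β) (Ico √(1 - 1 / β) 1) := by
  have hsub : Ico √(1 - 1 / β) 1 ⊆ Ioo (-1) 1 := fun x hx ↦
    ⟨by linarith [hx.1, sqrt_nonneg (1 - 1 / β)], hx.2⟩
  refine strictMonoOn_of_deriv_pos (convex_Ico _ _)
    (continuousOn_magnetizationGap.mono hsub) fun x hx ↦ ?_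
  rw [interior_Ico] at hx
  have hx0 : 0 < x := (sqrt_nonneg _).trans_lt hx.1
  rw [(hasDerivAt_magnetizationGap (hsub (Ioo_subset_Ico_self hx))).deriv, sub_pos]
  have hx2 : 1 - 1 / β < x ^ 2 := (sqrt_lt' hx0).1 hx.1
  exact (lt_inv_comm₀ hβ (by nlinarith [hx.2])).2 (by rw [← one_div]; linarith)

theorem magnetizationGap_neg (hβ : 0 < β) (hx : x ∈ Ioc 0 √(1 - 1 / β)) :
    magnetizationGap β x < 0 := by
  have h := strictAntiOn_magnetizationGap hβ ⟨le_rfl, hx.1.le.trans hx.2⟩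
    (Ioc_subset_Icc_self hx) hx.1
  rwa [magnetizationGap_zero] at h

end MagnetizationGap

/-- For `β > 1` the equation `m = tanh (β m)` has a unique positive solution
`m_β`, it lies in `(0,1)`, and `m*(β) = √(1-1/β)` satisfies
`0 < m*(β) < m_β < 1`. -/
theorem spontaneous_magnetization (β : ℝ) (hβ : 1 < β) :
    (∃! m : ℝ, 0 < m ∧ m = Real.tanh (β * m)) ∧
    (∀ m : ℝ, 0 < m → m = Real.tanh (β * m) →
      0 < Real.sqrt (1 - 1/β) ∧ Real.sqrt (1 - 1/β) < m ∧ m < 1) := by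
  have hβ0 : 0 < β := by linarith
  set c := √(1 - 1 / β)
  have hc : 0 < c := sqrt_pos.2 (by rw [sub_pos, div_lt_one hβ0]; exact hβ)
  have hsol : ∀ m, 0 < m → m = tanh (β * m) →
      c < m ∧ m < 1 ∧ magnetizationGap β m = 0 := by
    intro m hm hmt
    have hm1 : m < 1 := hmt ▸ tanh_lt_one _
    have hgap := (eq_tanh_mul_iff_magnetizationGap_eq_zero ⟨by linarith, hm1⟩).1 hmt
    exact ⟨not_le.1 fun hmc ↦ (magnetizationGap_neg hβ0 ⟨hm, hmc⟩).ne hgap, hm1, hgap⟩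
  have hct : c < tanh β := not_le.1 fun h ↦
    lt_asymm (magnetizationGap_neg hβ0 ⟨tanh_pos hβ0, h⟩) (magnetizationGap_tanh_pos hβ0)
  obtain ⟨m₀, ⟨hcm₀, hm₀t⟩, hm₀⟩ := intermediate_value_Icc hct.le
    (continuousOn_magnetizationGap.mono fun x hx ↦
      ⟨by linarith [hx.1], hx.2.trans_lt (tanh_lt_one β)⟩)
    ⟨(magnetizationGap_neg hβ0 ⟨hc, le_rfl⟩).le, (magnetizationGap_tanh_pos hβ0).le⟩
  have hm₀1 : m₀ < 1 := hm₀t.trans_lt (tanh_lt_one β)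
  refine ⟨⟨m₀, ⟨hc.trans_le hcm₀, ?_⟩, ?_⟩,
    fun m hm hmt ↦ ⟨hc, (hsol m hm hmt).1, (hsol m hm hmt).2.1⟩⟩
  · exact (eq_tanh_mul_iff_magnetizationGap_eq_zero ⟨by linarith, hm₀1⟩).2 hm₀
  · rintro m ⟨hm, hmt⟩
    obtain ⟨hcm, hm1, hgap⟩ := hsol m hm hmt
    exact (strictMonoOn_magnetizationGap hβ0).injOn ⟨hcm.le, hm1⟩ ⟨hcm₀, hm₀1⟩
      (hgap.trans hm₀.symm)
end

section
/- If m₀ solves the ODE m₀'(x) = -jε/(1 - β(1-m₀(x)²)) on [0, ε⁻¹] with m₀(0) = μ⁻ and m₀(ε⁻¹) = μ⁺, where m*(β) < μ⁺ < μ⁻ < 1, then the current is given explicitly by j = (1-β)(μ⁻ - μ⁺) + (β/3)((μ⁻)³ - (μ⁺)³), and j > 0. -/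
/-- If `m₀` solves the macroscopic equation
`m₀'(x) = -jε/(1-β(1-m₀(x)²))` on `[0, ε⁻¹]` with boundary values
`m₀(0) = μ⁻`, `m₀(ε⁻¹) = μ⁺` and `m*(β) < μ⁺ < μ⁻ < 1`, then
`j = (1-β)(μ⁻-μ⁺) + (β/3)((μ⁻)³-(μ⁺)³)` and `j > 0`. -/
theorem current_formula (β ε j μp μm : ℝ) (hβ : 1 < β) (hε : 0 < ε)
    (hμp : Real.sqrt (1 - 1/β) < μp) (hμ : μp < μm) (hμm : μm < 1)
    (m₀ : ℝ → ℝ)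
    (hrange : ∀ x ∈ Set.Icc (0:ℝ) ε⁻¹,
      m₀ x ∈ Set.Ioo (Real.sqrt (1 - 1/β)) 1)
    (hderiv : ∀ x ∈ Set.Icc (0:ℝ) ε⁻¹,
      HasDerivAt m₀ (-(j * ε) / (1 - β * (1 - (m₀ x)^2))) x)
    (h0 : m₀ 0 = μm) (h1 : m₀ ε⁻¹ = μp) :
    j = (1 - β) * (μm - μp) + (β/3) * (μm^3 - μp^3) ∧ 0 < j := by
  have hβ0 : (0:ℝ) < β := lt_trans one_pos hβ
  have hs0 : (0:ℝ) ≤ 1 - 1/β := by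
    have : 1/β < 1 := by
      rw [div_lt_one hβ0]; exact hβ
    linarith
  have hsq : Real.sqrt (1 - 1/β) ^ 2 = 1 - 1/β := Real.sq_sqrt hs0
  have hsnn : 0 ≤ Real.sqrt (1 - 1/β) := Real.sqrt_nonneg _
  -- denominator positivity
  have hden : ∀ x ∈ Set.Icc (0:ℝ) ε⁻¹, 0 < 1 - β * (1 - (m₀ x)^2) := by
    intro x hx
    obtain ⟨hl, _⟩ := hrange x hx
    have hm2 : (1 - 1/β) < (m₀ x)^2 := by
      rw [← hsq]
      have := hsnn
      nlinarith
    have : β * (1 - 1/β) < β * (m₀ x)^2 := by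
      exact (mul_lt_mul_iff_right₀ hβ0).2 hm2
    have hb : β * (1 - 1/β) = β - 1 := by field_simp
    nlinarith
  -- define g
  set g : ℝ → ℝ := fun x => (1-β) * (m₀ x) + β/3 * (m₀ x)^3 + j*ε*x with hg
  have hgderiv : ∀ x ∈ Set.Icc (0:ℝ) ε⁻¹, HasDerivAt g 0 x := by
    intro x hx
    have hd := hderiv x hx
    have h1' : HasDerivAt g
        ((1-β) * (-(j * ε) / (1 - β * (1 - (m₀ x)^2)))
          + β/3 * (3 * (m₀ x)^2 * (-(j * ε) / (1 - β * (1 - (m₀ x)^2))))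
          + j*ε) x := by
      exact ((hd.const_mul (1-β)).add ((hd.pow 3).const_mul (β/3))).add
        (by simpa using (hasDerivAt_id x).const_mul (j*ε))
    convert h1' using 1
    have hne : (1 - β * (1 - (m₀ x)^2)) ≠ 0 := ne_of_gt (hden x hx)
    field_simp
    ring
  -- g is constant on [0, ε⁻¹]
  have hcont : ContinuousOn g (Set.Icc (0:ℝ) ε⁻¹) := by
    intro x hx
    exact ((hgderiv x hx).continuousAt).continuousWithinAt
  have hconst : ∀ x ∈ Set.Icc (0:ℝ) ε⁻¹, g x = g 0 := by
    apply constant_of_has_deriv_right_zero hcont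
    intro x hx
    exact ((hgderiv x (Set.mem_Icc_of_Ico hx)).hasDerivWithinAt)
  have hεinv : ε⁻¹ ∈ Set.Icc (0:ℝ) ε⁻¹ :=
    ⟨le_of_lt (inv_pos.2 hε), le_refl _⟩
  have hkey := hconst ε⁻¹ hεinv
  simp only [hg] at hkey
  rw [h0, h1] at hkey
  have hεne : ε ≠ 0 := ne_of_gt hε
  have hjeq : j = (1 - β) * (μm - μp) + (β/3) * (μm^3 - μp^3) := by
    have : j * ε * ε⁻¹ = j := by field_simp
    nlinarith [hkey]
  refine ⟨hjeq, ?_⟩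
  rw [hjeq]
  have hμp0 : 0 ≤ μp := le_trans hsnn (le_of_lt hμp)
  have hμpsq : 1 - 1/β < μp^2 := by rw [← hsq]; nlinarith
  have hb : β * (1 - 1/β) = β - 1 := by field_simp
  have hS : 3*(1-1/β) < μm^2 + μm*μp + μp^2 := by nlinarith
  have hbr : 0 < (1-β) + β/3*(μm^2+μm*μp+μp^2) := by
    nlinarith [mul_lt_mul_of_pos_left hS hβ0]
  nlinarith [mul_pos (sub_pos.2 hμ) hbr]
end
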